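/- arXiv:1802.04858 — 10 statements merged into one kernel-verified Lean document; each statement's English description precedes it below -/
import Mathlib

section
/- Let β ∈ ℝ \ {0}. Suppose (ξ, c) ∈ ℝ² with ξ ≠ 0 satisfies the system β·ξ·cos(c) = sin(c) - sin(ξ + c) and β·ξ²·sin(ξ + c) = ξ·cos(ξ + c) - ξ·cos(c). Then cos(c) ≠ 0. -/
open Real

theorem cos_ne_zero_of_system (β ξ c : ℝ) (hβ : β ≠ 0) (hξ : ξ ≠ 0)
    (h1 : β * ξ * Real.cos c = Real.sin c - Real.sin (ξ + c))
    (h2 : β * ξ^2 * Real.sin (ξ + c) = ξ * Real.cos (ξ + c) - ξ * Real.cos c) :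
    Real.cos c ≠ 0 := by
  intro hc
  rw [hc] at h1 h2
  have hs : Real.sin (ξ + c) = Real.sin c := by linarith [h1, mul_zero (β * ξ)]
  have hs2 : Real.sin c ^ 2 = 1 := by nlinarith [Real.sin_sq_add_cos_sq c]
  have hcc : Real.cos (ξ + c) = 0 := by
    have hs2' : Real.sin (ξ + c) ^ 2 = 1 := by rw [hs]; exact hs2
    have : Real.cos (ξ + c) ^ 2 = 0 := by
      linarith [Real.sin_sq_add_cos_sq (ξ + c)]
    exact pow_eq_zero_iff (by norm_num) |>.mp this
  rw [hcc] at h2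
  have h0 : Real.sin (ξ + c) = 0 := by
    have h := mul_eq_zero.mp (by linarith : (β * ξ ^ 2) * Real.sin (ξ + c) = 0)
    rcases h with h | h
    · rcases mul_eq_zero.mp h with h' | h'
      · exact absurd h' hβ
      · exact absurd (pow_eq_zero_iff (by norm_num) |>.mp h') hξ
    · exact h
  nlinarith [hs, hs2]
end

section
/- Let β ∈ ℝ \ {0} and suppose (ξ, c) with ξ ≠ 0 and cos(c) ≠ 0 satisfies β·ξ·cos(c) = sin(c) - sin(ξ + c) and β·ξ²·sin(ξ + c) = ξ·cos(ξ + c) - ξ·cos(c). Then β²ξ² - 2·tan(c)·β·ξ + (tan²(c) - 1) = 0, and hence β·ξ = tan(c) + 1 or β·ξ = tan(c) - 1. -/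
open Real

/-- Substituting both relations into `sin² (x + c) + cos² (x + c) = sin² c + cos² c` leaves
`t² ((t cos c - sin c)² - cos² c) = 0`. -/
theorem mul_cos_sub_sin_sq_eq_cos_sq {t x c : ℝ} (ht : t ≠ 0)
    (hsin : sin (x + c) = sin c - t * cos c) (hcos : cos (x + c) = cos c + t * sin (x + c)) :
    (t * cos c - sin c) ^ 2 = cos c ^ 2 := by
  have hpyth : t ^ 2 * ((t * cos c - sin c) ^ 2 - cos c ^ 2) = 0 := by
    rw [hsin] at hcos
    linear_combination sin_sq_add_cos_sq (x + c) - sin_sq_add_cos_sq c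
      - (sin (x + c) + sin c - t * cos c) * hsin
      - (cos (x + c) + cos c + t * (sin c - t * cos c)) * hcos
  have := (mul_eq_zero.mp hpyth).resolve_left (pow_ne_zero 2 ht)
  linarith

theorem sub_tan_sq_eq_one_of_mul_cos_sub_sin_sq {t c : ℝ} (hc : cos c ≠ 0)
    (h : (t * cos c - sin c) ^ 2 = cos c ^ 2) : (t - tan c) ^ 2 = 1 := by
  rw [tan_eq_sin_div_cos]
  field_simp
  linear_combination h

theorem quadratic_in_beta_xi (β ξ c : ℝ) (hβ : β ≠ 0) (hξ : ξ ≠ 0)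
    (hc : Real.cos c ≠ 0)
    (h1 : β * ξ * Real.cos c = Real.sin c - Real.sin (ξ + c))
    (h2 : β * ξ^2 * Real.sin (ξ + c) = ξ * Real.cos (ξ + c) - ξ * Real.cos c) :
    β^2 * ξ^2 - 2 * Real.tan c * β * ξ + (Real.tan c ^ 2 - 1) = 0 ∧
      (β * ξ = Real.tan c + 1 ∨ β * ξ = Real.tan c - 1) := by
  have hsin : sin (ξ + c) = sin c - β * ξ * cos c := by linarith
  have hcos : cos (ξ + c) = cos c + β * ξ * sin (ξ + c) :=
    mul_left_cancel₀ hξ (by linear_combination -h2)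
  have hsq : (β * ξ - tan c) ^ 2 = 1 ^ 2 := by
    rw [one_pow]
    exact sub_tan_sq_eq_one_of_mul_cos_sub_sin_sq hc
      (mul_cos_sub_sin_sq_eq_cos_sq (mul_ne_zero hβ hξ) hsin hcos)
  refine ⟨by linear_combination hsq, ?_⟩
  rcases sq_eq_sq_iff_eq_or_eq_neg.mp hsq with h | h
  · exact Or.inl (by linarith)
  · exact Or.inr (by linarith)
end

section
/- Let β ∈ ℝ \ {0} and k ∈ ℤ. If c ∈ (-π/2, π/2) satisfies tan(c) = -2cβ + βπ/2 + 2πβk + 1 and ξ = (tan(c) - 1)/β, then (ξ, c) solves the system β·ξ·cos(c) = sin(c) - sin(ξ + c) and β·ξ²·sin(ξ + c) = ξ·cos(ξ + c) - ξ·cos(c). -/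
open Real

theorem solution_from_tan_eq (β : ℝ) (hβ : β ≠ 0) (k : ℤ) (c ξ : ℝ)
    (hc : c ∈ Set.Ioo (-(π/2)) (π/2))
    (htan : Real.tan c = -2*c*β + β*π/2 + 2*π*β*k + 1)
    (hξ : ξ = (Real.tan c - 1) / β) :
    β * ξ * Real.cos c = Real.sin c - Real.sin (ξ + c) ∧
      β * ξ^2 * Real.sin (ξ + c) = ξ * Real.cos (ξ + c) - ξ * Real.cos c := by
  have hcos : Real.cos c ≠ 0 := ne_of_gt (Real.cos_pos_of_mem_Ioo hc)
  have h1 : Real.tan c - 1 = β * (-2*c + π/2 + 2*π*k) := by rw [htan]; ring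
  have hξval : ξ = -2*c + π/2 + 2*π*k := by
    rw [hξ, h1, mul_div_cancel_left₀ _ hβ]
  have hβξ : β * ξ = Real.tan c - 1 := by
    rw [hξ]; field_simp
  have hsum : ξ + c = (π/2 - c) + k * (2*π) := by rw [hξval]; ring
  have hsin : Real.sin (ξ + c) = Real.cos c := by
    rw [hsum, Real.sin_add_int_mul_two_pi, Real.sin_pi_div_two_sub]
  have hcosξ : Real.cos (ξ + c) = Real.sin c := by
    rw [hsum, Real.cos_add_int_mul_two_pi, Real.cos_pi_div_two_sub]
  have htanc : Real.tan c * Real.cos c = Real.sin c := by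
    rw [Real.tan_eq_sin_div_cos]; field_simp
  constructor
  · rw [hsin]
    calc β * ξ * Real.cos c = (Real.tan c - 1) * Real.cos c := by rw [hβξ]
      _ = Real.tan c * Real.cos c - Real.cos c := by ring
      _ = Real.sin c - Real.cos c := by rw [htanc]
  · rw [hsin, hcosξ]
    have : β * ξ ^ 2 * Real.cos c = ξ * ((Real.tan c - 1) * Real.cos c) := by
      rw [← hβξ]; ring
    rw [this]
    have : (Real.tan c - 1) * Real.cos c = Real.sin c - Real.cos c := by
      rw [sub_mul, htanc, one_mul]
    rw [this]; ring
end

section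
/- Let α > 0 and for each k ∈ ℤ let γ_k ∈ (-π/2, π/2) be the unique solution of tan(γ) = -2γα + απ/2 + 2παk + 1, and set b_k := -2γ_k + π/2 + 2πk. Then for k₁ ≠ k₂ in ℤ we have b_{k₁}² ≠ b_{k₂}². -/
open Real

theorem eigenvalues_simple_one_atom (α : ℝ) (hα : 0 < α) (γ b : ℤ → ℝ)
    (hγ : ∀ k : ℤ, γ k ∈ Set.Ioo (-(π/2)) (π/2) ∧
      Real.tan (γ k) = -2*(γ k)*α + α*π/2 + 2*π*α*k + 1)
    (hb : ∀ k : ℤ, b k = -2*(γ k) + π/2 + 2*π*k) :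
    ∀ k₁ k₂ : ℤ, k₁ ≠ k₂ → (b k₁)^2 ≠ (b k₂)^2 := by
  have hπ := Real.pi_pos
  -- injectivity of b
  have binj : ∀ k₁ k₂ : ℤ, b k₁ = b k₂ → k₁ = k₂ := by
    intro k₁ k₂ h
    rw [hb k₁, hb k₂] at h
    have h1 := (hγ k₁).1
    have h2 := (hγ k₂).1
    simp only [Set.mem_Ioo] at h1 h2
    have hk : 2*π*((k₁ : ℝ) - k₂) = 2*(γ k₁ - γ k₂) := by ring_nf; ring_nf at h; linarith
    have hlt : ((k₁ - k₂ : ℤ) : ℝ) < 1 := by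
      push_cast; nlinarith [h1.1, h1.2, h2.1, h2.2]
    have hgt : (-1 : ℝ) < ((k₁ - k₂ : ℤ) : ℝ) := by
      push_cast; nlinarith [h1.1, h1.2, h2.1, h2.2]
    have : k₁ - k₂ < 1 := by exact_mod_cast hlt
    have : (-1 : ℤ) < k₁ - k₂ := by exact_mod_cast hgt
    omega
  intro k₁ k₂ hne heq
  rcases sq_eq_sq_iff_eq_or_eq_neg.mp heq with h | h
  · exact hne (binj _ _ h)
  -- opposite case
  have h1 := (hγ k₁).1
  have h2 := (hγ k₂).1
  simp only [Set.mem_Ioo] at h1 h2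
  have ht1 : Real.tan (γ k₁) = α * b k₁ + 1 := by
    rw [(hγ k₁).2, hb k₁]; ring
  have ht2 : Real.tan (γ k₂) = α * b k₂ + 1 := by
    rw [(hγ k₂).2, hb k₂]; ring
  set x := b k₁ with hx
  have hbk2 : b k₂ = -x := by linarith [h]
  -- γ k₁ + γ k₂ = π/2 + π * n with n = k₁ + k₂
  have hsum : γ k₁ + γ k₂ = π/2 + π * ((k₁ + k₂ : ℤ) : ℝ) := by
    have e1 : x = -2*(γ k₁) + π/2 + 2*π*k₁ := hb k₁
    have e2 := hb k₂
    rw [hbk2] at e2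
    push_cast
    push_cast at e1 e2
    nlinarith [e1, e2]
  -- determine n ∈ {-1, 0}
  have hn1 : (2 : ℝ) * ((k₁ + k₂ : ℤ) : ℝ) < 1 := by nlinarith [h1.2, h2.2, hsum]
  have hn2 : (-3 : ℝ) < 2 * ((k₁ + k₂ : ℤ) : ℝ) := by nlinarith [h1.1, h2.1, hsum]
  have hn1' : 2 * (k₁ + k₂) < 1 := by exact_mod_cast hn1
  have hn2' : (-3 : ℤ) < 2 * (k₁ + k₂) := by exact_mod_cast hn2
  have hncases : k₁ + k₂ = 0 ∨ k₁ + k₂ = -1 := by omega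
  -- in both cases tan (γ k₂) = (tan (γ k₁))⁻¹
  have hinv : Real.tan (γ k₂) = (Real.tan (γ k₁))⁻¹ := by
    rcases hncases with hn | hn
    · have : γ k₂ = π/2 - γ k₁ := by rw [hn] at hsum; push_cast at hsum; linarith
      rw [this, Real.tan_pi_div_two_sub]
    · have : γ k₂ = (π/2 - γ k₁) - π := by rw [hn] at hsum; push_cast at hsum; linarith
      rw [this, Real.tan_sub_pi, Real.tan_pi_div_two_sub]
  by_cases h0 : Real.tan (γ k₁) = 0
  · rw [h0, inv_zero] at hinv
    rw [ht2, hbk2] at hinv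
    rw [ht1] at h0
    linarith
  · have hprod : Real.tan (γ k₁) * Real.tan (γ k₂) = 1 := by
      rw [hinv, mul_inv_cancel₀ h0]
    rw [ht1, ht2, hbk2] at hprod
    have hax : (α * x)^2 = 0 := by nlinarith [hprod]
    have hax0 : α * x = 0 := by
      have := sq_eq_zero_iff.mp hax
      exact this
    have hx0 : x = 0 := by
      rcases mul_eq_zero.mp hax0 with h' | h'
      · exact absurd h' (ne_of_gt hα)
      · exact h'
    have : b k₁ = b k₂ := by rw [hbk2, ← hx, hx0]; ring
    exact hne (binj _ _ this)
end

section
/- Let α > 0, and for k ∈ ℤ let γ_k ∈ (-π/2, π/2) be the unique solution of tan(γ) = -2γα + απ/2 + 2παk + 1 and b_k := -2γ_k + π/2 + 2πk. Then the eigenvalue counting function N(x) := #{k ∈ ℤ : b_k² ≤ x} satisfies lim_{x→∞} π·N(x)/√x = 1. -/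
open Real Filter

set_option maxHeartbeats 1000000 in
theorem eigenvalue_counting_one_atom (α : ℝ) (hα : 0 < α) (γ b : ℤ → ℝ)
    (hγ : ∀ k : ℤ, γ k ∈ Set.Ioo (-(π/2)) (π/2) ∧
      Real.tan (γ k) = -2*(γ k)*α + α*π/2 + 2*π*α*k + 1)
    (hb : ∀ k : ℤ, b k = -2*(γ k) + π/2 + 2*π*k) :
    Tendsto (fun x : ℝ => π * (Set.ncard {k : ℤ | (b k)^2 ≤ x} : ℝ) / Real.sqrt x)
      atTop (nhds 1) := by
  have hπ : (0:ℝ) < π := Real.pi_pos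
  -- bounds on b k
  have hbk : ∀ k : ℤ, 2*π*k - π/2 < b k ∧ b k < 2*π*k + 3*π/2 := by
    intro k
    obtain ⟨⟨h1, h2⟩, _⟩ := hγ k
    rw [hb k]
    constructor <;> linarith
  -- key eventual bounds
  have key : ∀ x : ℝ, 4*π^2 ≤ x →
      1 - 2*π/Real.sqrt x ≤ π * (Set.ncard {k : ℤ | (b k)^2 ≤ x} : ℝ) / Real.sqrt x ∧
      π * (Set.ncard {k : ℤ | (b k)^2 ≤ x} : ℝ) / Real.sqrt x ≤ 1 + 2*π/Real.sqrt x := by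
    intro x hx
    have hx0 : (0:ℝ) ≤ x := le_trans (by positivity) hx
    set s := Real.sqrt x with hs
    have hs2 : 2*π ≤ s := by
      rw [hs, show (4:ℝ)*π^2 = (2*π)^2 by ring] at *
      exact (Real.le_sqrt (by positivity) hx0).mpr hx
    have hs0 : (0:ℝ) < s := lt_of_lt_of_le (by positivity) hs2
    have hsx : s^2 = x := Real.sq_sqrt hx0
    set m₁ : ℤ := ⌈(-s + π/2)/(2*π)⌉ with hm₁
    set n₁ : ℤ := ⌊(s - 3*π/2)/(2*π)⌋ with hn₁
    set m₂ : ℤ := ⌈(-s - 3*π/2)/(2*π)⌉ with hm₂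
    set n₂ : ℤ := ⌊(s + π/2)/(2*π)⌋ with hn₂
    have hsub1 : ↑(Finset.Icc m₁ n₁) ⊆ {k : ℤ | (b k)^2 ≤ x} := by
      intro k hk
      simp only [Finset.coe_Icc, Set.mem_Icc] at hk
      obtain ⟨h1, h2⟩ := hk
      have h1' : (-s + π/2)/(2*π) ≤ (k:ℝ) := by
        have := Int.ceil_le.mp h1; exact_mod_cast this
      have h2' : (k:ℝ) ≤ (s - 3*π/2)/(2*π) := by
        have := Int.le_floor.mp h2; exact_mod_cast this
      have h1'' : -s + π/2 ≤ 2*π*k := by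
        have := (div_le_iff₀ (by positivity : (0:ℝ) < 2*π)).mp h1'
        linarith
      have h2'' : 2*π*k ≤ s - 3*π/2 := by
        have := (le_div_iff₀ (by positivity : (0:ℝ) < 2*π)).mp h2'
        linarith
      obtain ⟨hl, hr⟩ := hbk k
      have : (b k)^2 ≤ s^2 := sq_le_sq' (by linarith) (by linarith)
      simpa [Set.mem_setOf_eq, hsx] using this.trans_eq hsx
    have hsub2 : {k : ℤ | (b k)^2 ≤ x} ⊆ ↑(Finset.Icc m₂ n₂) := by
      intro k hk
      simp only [Set.mem_setOf_eq] at hk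
      have habs : |b k| ≤ s := by
        have := Real.sqrt_le_sqrt hk
        rwa [Real.sqrt_sq_eq_abs] at this
      have hbl : -s ≤ b k := (abs_le.mp habs).1
      have hbr : b k ≤ s := (abs_le.mp habs).2
      obtain ⟨hl, hr⟩ := hbk k
      simp only [Finset.coe_Icc, Set.mem_Icc]
      constructor
      · rw [hm₂]
        apply Int.ceil_le.mpr
        rw [div_le_iff₀ (by positivity : (0:ℝ) < 2*π)]
        push_cast
        nlinarith
      · rw [hn₂]
        apply Int.le_floor.mpr
        rw [le_div_iff₀ (by positivity : (0:ℝ) < 2*π)]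
        push_cast
        nlinarith
    have hfin : {k : ℤ | (b k)^2 ≤ x}.Finite :=
      Set.Finite.subset (Finset.finite_toSet _) hsub2
    set N := Set.ncard {k : ℤ | (b k)^2 ≤ x} with hN
    have hle1 : (Finset.Icc m₁ n₁).card ≤ N := by
      rw [hN, ← Set.ncard_coe_finset]
      exact Set.ncard_le_ncard hsub1 hfin
    have hle2 : N ≤ (Finset.Icc m₂ n₂).card := by
      rw [hN, ← Set.ncard_coe_finset]
      exact Set.ncard_le_ncard hsub2 (Finset.finite_toSet _)
    rw [Int.card_Icc] at hle1 hle2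
    -- floor/ceil real estimates
    have hf1 : (s - 3*π/2)/(2*π) - 1 < (n₁:ℝ) := Int.sub_one_lt_floor _
    have hc1 : (m₁:ℝ) < (-s + π/2)/(2*π) + 1 := Int.ceil_lt_add_one _
    have hf2 : (n₂:ℝ) ≤ (s + π/2)/(2*π) := Int.floor_le _
    have hc2 : (-s - 3*π/2)/(2*π) ≤ (m₂:ℝ) := Int.le_ceil _
    -- lower bound on N
    have hNlow : s/π - 2 ≤ (N:ℝ) := by
      have h1 : ((n₁ + 1 - m₁ : ℤ):ℝ) ≤ ((n₁ + 1 - m₁).toNat : ℝ) := by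
        exact_mod_cast Int.self_le_toNat _
      have h2 : ((n₁ + 1 - m₁).toNat : ℝ) ≤ (N:ℝ) := by exact_mod_cast hle1
      have hkey : s/π - 2 ≤ ((n₁ + 1 - m₁ : ℤ):ℝ) := by
        push_cast
        have e : (s - 3*π/2)/(2*π) - ((-s + π/2)/(2*π)) = s/π - 1 := by
          field_simp; ring
        nlinarith
      linarith
    -- upper bound on N
    have hNhigh : (N:ℝ) ≤ s/π + 2 := by
      have h2 : (N:ℝ) ≤ ((n₂ + 1 - m₂).toNat : ℝ) := by exact_mod_cast hle2
      have h1 : ((n₂ + 1 - m₂).toNat : ℝ) = max ((n₂ + 1 - m₂ : ℤ):ℝ) 0 := by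
        rw [show ((n₂ + 1 - m₂).toNat : ℝ) = (((n₂ + 1 - m₂).toNat : ℤ) : ℝ) by push_cast; ring,
          Int.toNat_eq_max]
        push_cast; ring_nf
      have hkey : ((n₂ + 1 - m₂ : ℤ):ℝ) ≤ s/π + 2 := by
        push_cast
        have e : (s + π/2)/(2*π) - ((-s - 3*π/2)/(2*π)) = s/π + 1 := by
          field_simp; ring
        nlinarith
      have hpos : (0:ℝ) ≤ s/π + 2 := by positivity
      rw [h1] at h2
      exact h2.trans (max_le hkey hpos)
    have hsπ : π * (s/π) = s := by field_simp
    constructor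
    · rw [le_div_iff₀ hs0]
      have h : (1 - 2*π/s) * s = s - 2*π := by field_simp
      rw [h]
      nlinarith [mul_le_mul_of_nonneg_left hNlow hπ.le]
    · rw [div_le_iff₀ hs0]
      have h : (1 + 2*π/s) * s = s + 2*π := by field_simp
      rw [h]
      nlinarith [mul_le_mul_of_nonneg_left hNhigh hπ.le]
  -- squeeze
  have hsqrt : Tendsto Real.sqrt atTop atTop := by
    apply tendsto_atTop_atTop.mpr
    intro c
    refine ⟨(max c 0)^2, fun x hx => ?_⟩
    have : max c 0 ≤ Real.sqrt x :=
      (Real.le_sqrt (le_max_right _ _) (le_trans (by positivity) hx)).mpr hx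
    exact le_trans (le_max_left _ _) this
  have hlim0 : Tendsto (fun x : ℝ => 2*π / Real.sqrt x) atTop (nhds 0) :=
    Tendsto.div_atTop tendsto_const_nhds hsqrt
  have hliml : Tendsto (fun x : ℝ => 1 - 2*π / Real.sqrt x) atTop (nhds 1) := by
    simpa using tendsto_const_nhds.sub hlim0
  have hlimu : Tendsto (fun x : ℝ => 1 + 2*π / Real.sqrt x) atTop (nhds 1) := by
    simpa using tendsto_const_nhds.add hlim0
  refine tendsto_of_tendsto_of_tendsto_of_le_of_le' hliml hlimu ?_ ?_
  · filter_upwards [eventually_ge_atTop (4*π^2)] with x hx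
    exact (key x hx).1
  · filter_upwards [eventually_ge_atTop (4*π^2)] with x hx
    exact (key x hx).2
end

section
/- Let α > 0, and let λ_k denote the k-th largest element of the set {b_j² : j ∈ ℤ} of squared solutions, where γ_j ∈ (-π/2, π/2) solves tan(γ) = -2γα + απ/2 + 2παj + 1 and b_j := -2γ_j + π/2 + 2πj. Then lim_{k→∞} λ_k/(kπ + π/2)² = 1. -/
open Real Filter

set_option maxHeartbeats 1600000 in
theorem eigenvalue_asymptotics_one_atom (α : ℝ) (hα : 0 < α) (γ b : ℤ → ℝ)
    (hγ : ∀ j : ℤ, γ j ∈ Set.Ioo (-(π/2)) (π/2) ∧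
      Real.tan (γ j) = -2*(γ j)*α + α*π/2 + 2*π*α*j + 1)
    (hb : ∀ j : ℤ, b j = -2*(γ j) + π/2 + 2*π*j)
    (lam : ℕ → ℝ) (hmono : StrictMono lam)
    (hrange : Set.range lam = {x : ℝ | ∃ j : ℤ, j ≠ 0 ∧ x = (b j)^2}) :
    Tendsto (fun k : ℕ => lam k / ((k:ℝ)*π + π/2)^2) atTop (nhds 1) := by
  classical
  have hπ := Real.pi_pos
  have htan : ∀ j : ℤ, Real.tan (γ j) = α * b j + 1 := by
    intro j
    rw [(hγ j).2, hb j]; ring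
  have hγIoo : ∀ j : ℤ, -(π/2) < γ j ∧ γ j < π/2 := by
    intro j
    have := (hγ j).1
    rwa [Set.mem_Ioo] at this
  -- injectivity of j ↦ (b j)^2 on nonzero j
  have hinj : ∀ j j' : ℤ, j ≠ 0 → (b j)^2 = (b j')^2 → j = j' := by
    intro j j' hj hsq
    obtain ⟨hγj1, hγj2⟩ := hγIoo j
    obtain ⟨hγj'1, hγj'2⟩ := hγIoo j'
    have h0 : (b j - b j') * (b j + b j') = 0 := by linear_combination hsq
    rcases mul_eq_zero.1 h0 with h | h
    · -- b j = b j'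
      have hbe : b j = b j' := by linarith
      have hd : γ j - γ j' = π * ((j:ℝ) - (j':ℝ)) := by
        rw [hb j, hb j'] at hbe
        linear_combination -hbe/2
      have h1 : (-1:ℝ) < (j:ℝ) - (j':ℝ) := by nlinarith
      have h2 : ((j:ℝ) - (j':ℝ)) < 1 := by nlinarith
      have h1' : (-1:ℤ) < j - j' := by exact_mod_cast h1
      have h2' : (j:ℤ) - j' < 1 := by exact_mod_cast h2
      omega
    · -- b j = - b j'
      exfalso
      have hbe : b j' = -(b j) := by linarith
      have hsum : γ j + γ j' = π/2 + π * ((j:ℝ) + (j':ℝ)) := by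
        have h' : b j + b j' = 0 := by linarith
        rw [hb j, hb j'] at h'
        linear_combination -h'/2
      have hn1 : (-2:ℝ) < (j:ℝ) + (j':ℝ) := by nlinarith
      have hn2 : ((j:ℝ) + (j':ℝ)) < 1 := by nlinarith
      have hn1' : (-2:ℤ) < j + j' := by exact_mod_cast hn1
      have hn2' : (j:ℤ) + j' < 1 := by exact_mod_cast hn2
      have hn : j + j' = -1 ∨ j + j' = 0 := by omega
      -- in both cases, tan (γ j') = (tan (γ j))⁻¹
      have hti : Real.tan (γ j') = (Real.tan (γ j))⁻¹ := by
        rcases hn with hn | hn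
        · have hnr : (j:ℝ) + (j':ℝ) = -1 := by exact_mod_cast hn
          have hγ' : γ j' = (π/2 - γ j) - π := by
            rw [hnr] at hsum; linarith
          rw [hγ', Real.tan_periodic.sub_eq, Real.tan_pi_div_two_sub]
        · have hnr : (j:ℝ) + (j':ℝ) = 0 := by exact_mod_cast hn
          have hγ' : γ j' = π/2 - γ j := by
            rw [hnr] at hsum; linarith
          rw [hγ', Real.tan_pi_div_two_sub]
      have e1 : Real.tan (γ j) = α * b j + 1 := htan j
      have e2 : (Real.tan (γ j))⁻¹ = -(α * b j) + 1 := by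
        rw [← hti, htan j', hbe]; ring
      by_cases hb0 : b j = 0
      · -- then tan (γ j) = 1, γ j = π/4, so j = 0
        have ht1 : Real.tan (γ j) = 1 := by rw [e1, hb0]; ring
        have hγ4 : γ j = π/4 := by
          have := Real.arctan_tan hγj1 hγj2
          rw [ht1, Real.arctan_one] at this
          linarith
        have : b j = 2*π*(j:ℝ) := by rw [hb j, hγ4]; ring
        rw [hb0] at this
        have hj0 : (j:ℝ) = 0 := by
          by_contra hne
          rcases lt_or_gt_of_ne hne with hlt | hgt
          · nlinarith
          · nlinarith
        exact hj (by exact_mod_cast hj0)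
      · -- b j ≠ 0
        have htne : Real.tan (γ j) ≠ 0 := by
          intro h0'
          rw [h0'] at e1 e2
          simp at e2
          have : α * b j = -1 := by linarith
          linarith [e2]
        have hmul := mul_inv_cancel₀ htne
        rw [e2, e1] at hmul
        have hzero : (α * b j)^2 = 0 := by linear_combination -hmul
        have hane : α * b j ≠ 0 := mul_ne_zero (ne_of_gt hα) hb0
        exact hane ((pow_eq_zero_iff two_ne_zero).mp hzero)
  -- bounds on |b j|
  have hbound : ∀ j : ℤ, 2*π*|(j:ℝ)| - 3*π/2 < |b j| ∧ |b j| < 2*π*|(j:ℝ)| + 3*π/2 := by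
    intro j
    obtain ⟨h1, h2⟩ := hγIoo j
    have hd : |b j - 2*π*(j:ℝ)| < 3*π/2 := by
      rw [abs_lt]
      constructor
      · rw [hb j]; push_cast; linarith
      · rw [hb j]; push_cast; linarith
    have habs2 : |2*π*(j:ℝ)| = 2*π*|(j:ℝ)| := by
      rw [abs_mul, abs_of_pos (by linarith : (0:ℝ) < 2*π)]
    have hA := abs_sub_abs_le_abs_sub (b j) (2*π*(j:ℝ))
    have hB := abs_sub_abs_le_abs_sub (2*π*(j:ℝ)) (b j)
    rw [abs_sub_comm] at hB
    constructor
    · linarith [hB, hd, habs2.le, habs2.ge]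
    · linarith [hA, hd, habs2.le, habs2.ge]
  -- choice functions
  have hmem : ∀ i : ℕ, ∃ j : ℤ, j ≠ 0 ∧ lam i = (b j)^2 := by
    intro i
    have h : lam i ∈ Set.range lam := Set.mem_range_self i
    rw [hrange] at h
    exact h
  choose g hg0 hg using hmem
  have hex : ∀ j : ℤ, ∃ i : ℕ, j ≠ 0 → lam i = (b j)^2 := by
    intro j
    by_cases hj : j = 0
    · exact ⟨0, fun h => absurd hj h⟩
    · have : (b j)^2 ∈ Set.range lam := by
        rw [hrange]; exact ⟨j, hj, rfl⟩
      obtain ⟨i, hi⟩ := this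
      exact ⟨i, fun _ => hi⟩
  choose f hf using hex
  -- upper counting bound
  have hupper : ∀ m : ℕ, 1 ≤ m → lam (2*m - 1) < (2*π*(m:ℝ) + 3*π/2)^2 := by
    intro m hm
    set J : Finset ℤ := (Finset.Icc (-(m:ℤ)) (m:ℤ)).erase 0 with hJ
    have h0mem : (0:ℤ) ∈ Finset.Icc (-(m:ℤ)) (m:ℤ) := by
      rw [Finset.mem_Icc]; omega
    have hJcard : J.card = 2*m := by
      rw [hJ, Finset.card_erase_of_mem h0mem, Int.card_Icc]
      omega
    have hinjJ : Set.InjOn f (J : Set ℤ) := by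
      intro a ha a' ha' hfa
      have ha0 : a ≠ 0 := (Finset.mem_erase.1 ha).1
      have ha0' : a' ≠ 0 := (Finset.mem_erase.1 ha').1
      apply hinj a a' ha0
      rw [← hf a ha0, ← hf a' ha0', hfa]
    set T : Finset ℕ := J.image f with hT
    have hTcard : T.card = 2*m := by
      rw [hT, Finset.card_image_of_injOn hinjJ, hJcard]
    have hTne : T.Nonempty := by
      rw [← Finset.card_pos, hTcard]; omega
    have hMmem := T.max'_mem hTne
    have hsub : T ⊆ Finset.range (T.max' hTne + 1) := by
      intro x hx
      exact Finset.mem_range.2 (Nat.lt_succ_of_le (Finset.le_max' T x hx))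
    have hcard := Finset.card_le_card hsub
    rw [hTcard, Finset.card_range] at hcard
    obtain ⟨j₀, hj₀J, hj₀⟩ := Finset.mem_image.1 hMmem
    have hj₀0 : j₀ ≠ 0 := (Finset.mem_erase.1 hj₀J).1
    have hj₀abs : |(j₀:ℝ)| ≤ (m:ℝ) := by
      have hIcc := (Finset.mem_erase.1 hj₀J).2
      rw [Finset.mem_Icc] at hIcc
      rw [abs_le]
      constructor
      · exact_mod_cast hIcc.1
      · exact_mod_cast hIcc.2
    have hblt : |b j₀| < 2*π*(m:ℝ) + 3*π/2 := by
      have := (hbound j₀).2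
      nlinarith
    calc lam (2*m - 1) ≤ lam (T.max' hTne) := hmono.monotone (by omega)
      _ = (b j₀)^2 := by rw [← hj₀]; exact hf j₀ hj₀0
      _ = |b j₀|^2 := (sq_abs _).symm
      _ < (2*π*(m:ℝ) + 3*π/2)^2 := by
          exact pow_lt_pow_left₀ hblt (abs_nonneg _) (by norm_num)
  -- lower counting bound
  have hlower : ∀ m : ℕ, 1 ≤ m → (2*π*(m:ℝ) - 3*π/2)^2 ≤ lam (2*m - 2) := by
    intro m hm
    by_contra hcon
    push_neg at hcon
    have hm1 : (1:ℝ) ≤ (m:ℝ) := by exact_mod_cast hm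
    have hC0 : (0:ℝ) ≤ 2*π*(m:ℝ) - 3*π/2 := by nlinarith
    set J' : Finset ℤ := (Finset.Icc (-(m:ℤ)+1) ((m:ℤ)-1)).erase 0 with hJ'
    have h0mem : (0:ℤ) ∈ Finset.Icc (-(m:ℤ)+1) ((m:ℤ)-1) := by
      rw [Finset.mem_Icc]; omega
    have hJ'card : J'.card = 2*m - 2 := by
      rw [hJ', Finset.card_erase_of_mem h0mem, Int.card_Icc]
      omega
    have hmaps : ∀ i ∈ Finset.range (2*m - 1), g i ∈ J' := by
      intro i hi
      rw [Finset.mem_range] at hi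
      have hile : lam i ≤ lam (2*m - 2) := hmono.monotone (by omega)
      have hbi : (b (g i))^2 < (2*π*(m:ℝ) - 3*π/2)^2 := by
        rw [← hg i]; exact lt_of_le_of_lt hile hcon
      have habs : |b (g i)| < 2*π*(m:ℝ) - 3*π/2 := by
        nlinarith [abs_nonneg (b (g i)), sq_abs (b (g i))]
      have hjlt : 2*π*|((g i : ℤ):ℝ)| - 3*π/2 < 2*π*(m:ℝ) - 3*π/2 :=
        lt_trans (hbound (g i)).1 habs
      have hjm : |((g i : ℤ):ℝ)| < (m:ℝ) := by nlinarith
      rw [abs_lt] at hjm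
      have hlt1 : -(m:ℤ) < g i := by exact_mod_cast hjm.1
      have hlt2 : (g i : ℤ) < (m:ℤ) := by exact_mod_cast hjm.2
      rw [hJ', Finset.mem_erase, Finset.mem_Icc]
      exact ⟨hg0 i, by omega, by omega⟩
    have hinjOn : Set.InjOn g (Finset.range (2*m - 1) : Set ℕ) := by
      intro i _ i' _ hgi
      apply hmono.injective
      rw [hg i, hg i', hgi]
    have hcard := Finset.card_le_card_of_injOn g hmaps hinjOn
    rw [Finset.card_range, hJ'card] at hcard
    omega
  -- squeeze bounds for each k ≥ 1
  have hsqz : ∀ k : ℕ, 1 ≤ k →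
      (π*(k:ℝ) - π/2)^2 ≤ lam k ∧ lam k ≤ (π*(k:ℝ) + 7*π/2)^2 := by
    intro k hk
    set m : ℕ := k/2 + 1 with hm
    have hm1 : 1 ≤ m := by omega
    have hcast1 : (k:ℝ) + 1 ≤ 2*(m:ℝ) := by exact_mod_cast (by omega : k + 1 ≤ 2*m)
    have hcast2 : (2:ℝ)*(m:ℝ) ≤ (k:ℝ) + 2 := by exact_mod_cast (by omega : 2*m ≤ k + 2)
    have hk1 : (1:ℝ) ≤ (k:ℝ) := by exact_mod_cast hk
    constructor
    · have h1 : (π*(k:ℝ) - π/2)^2 ≤ (2*π*(m:ℝ) - 3*π/2)^2 := by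
        have hA : 0 ≤ π*(k:ℝ) - π/2 := by nlinarith
        have hAB : π*(k:ℝ) - π/2 ≤ 2*π*(m:ℝ) - 3*π/2 := by nlinarith
        nlinarith [hA, hAB]
      calc (π*(k:ℝ) - π/2)^2 ≤ (2*π*(m:ℝ) - 3*π/2)^2 := h1
        _ ≤ lam (2*m - 2) := hlower m hm1
        _ ≤ lam k := hmono.monotone (by omega)
    · have h2 : (2*π*(m:ℝ) + 3*π/2)^2 ≤ (π*(k:ℝ) + 7*π/2)^2 := by
        have hm0 : (0:ℝ) ≤ (m:ℝ) := Nat.cast_nonneg m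
        have hB : 0 ≤ 2*π*(m:ℝ) + 3*π/2 := by nlinarith
        have hBC : 2*π*(m:ℝ) + 3*π/2 ≤ π*(k:ℝ) + 7*π/2 := by nlinarith
        nlinarith [hB, hBC]
      calc lam k ≤ lam (2*m - 1) := hmono.monotone (by omega)
        _ ≤ (2*π*(m:ℝ) + 3*π/2)^2 := le_of_lt (hupper m hm1)
        _ ≤ (π*(k:ℝ) + 7*π/2)^2 := h2
  -- limits of the bounding sequences
  have hDpos : ∀ k : ℕ, (0:ℝ) < (k:ℝ)*π + π/2 := by
    intro k
    have : (0:ℝ) ≤ (k:ℝ) := Nat.cast_nonneg k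
    nlinarith
  have hatTop : Tendsto (fun k : ℕ => (k:ℝ)*π + π/2) atTop atTop := by
    apply tendsto_atTop_add_const_right
    exact Tendsto.atTop_mul_const hπ tendsto_natCast_atTop_atTop
  have hlim : ∀ c : ℝ, Tendsto (fun k : ℕ => (π*(k:ℝ) + c)/((k:ℝ)*π + π/2)) atTop (nhds 1) := by
    intro c
    have h0 : Tendsto (fun k : ℕ => (c - π/2)/((k:ℝ)*π + π/2)) atTop (nhds 0) :=
      tendsto_const_nhds.div_atTop hatTop
    have h1 := h0.const_add 1
    rw [add_zero] at h1
    apply h1.congr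
    intro k
    have hne := (hDpos k).ne'
    field_simp
    ring
  have hL : Tendsto (fun k : ℕ => ((π*(k:ℝ) - π/2)/((k:ℝ)*π + π/2))^2) atTop (nhds 1) := by
    have h := (hlim (-(π/2))).pow 2
    rw [one_pow] at h
    apply h.congr
    intro k
    ring_nf
  have hU : Tendsto (fun k : ℕ => ((π*(k:ℝ) + 7*π/2)/((k:ℝ)*π + π/2))^2) atTop (nhds 1) := by
    have h := (hlim (7*π/2)).pow 2
    rw [one_pow] at h
    exact h
  apply tendsto_of_tendsto_of_tendsto_of_le_of_le' hL hU
  · filter_upwards [eventually_ge_atTop 1] with k hk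
    have h1 := (hsqz k hk).1
    have hD := hDpos k
    rw [div_pow]
    gcongr
  · filter_upwards [eventually_ge_atTop 1] with k hk
    have h2 := (hsqz k hk).2
    have hD := hDpos k
    rw [div_pow]
    gcongr
end

section
/- Let α > 0 and k ∈ ℤ \ {0}, let γ_k ∈ (-π/2, π/2) solve tan(γ) = -2γα + απ/2 + 2παk + 1 and b_k := -2γ_k + π/2 + 2πk. Then sin(b_k + γ_k) ≠ sin(γ_k); i.e., the periodic extension of the eigenfunction x ↦ sin(b_k·x + γ_k) is discontinuous at integer points. -/
open Real

theorem eigenfunction_discontinuous (α : ℝ) (hα : 0 < α) (k : ℤ) (hk : k ≠ 0)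
    (γk bk : ℝ)
    (hγ : γk ∈ Set.Ioo (-(π/2)) (π/2))
    (htan : Real.tan γk = -2*γk*α + α*π/2 + 2*π*α*k + 1)
    (hb : bk = -2*γk + π/2 + 2*π*k) :
    Real.sin (bk + γk) ≠ Real.sin γk := by
  have hπ := Real.pi_pos
  intro h
  have hcos : 0 < Real.cos γk := Real.cos_pos_of_mem_Ioo hγ
  have hsin : Real.sin (bk + γk) = Real.cos γk := by
    have he : bk + γk = (π/2 - γk) + (k : ℝ) * (2 * π) := by rw [hb]; ring
    rw [he, Real.sin_add_int_mul_two_pi, Real.sin_pi_div_two_sub]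
  have htan1 : Real.tan γk = 1 := by
    rw [Real.tan_eq_sin_div_cos, h.symm, hsin, div_self (ne_of_gt hcos)]
  have hzero : α * (-2*γk + π/2 + 2*π*k) = 0 := by
    have := htan.symm.trans htan1
    nlinarith [this]
  have hγk : γk = π/4 + π*k := by
    have h2 : -2*γk + π/2 + 2*π*k = 0 := by
      rcases mul_eq_zero.mp hzero with h' | h'
      · exact absurd h' (ne_of_gt hα)
      · exact h'
    linarith
  have h1 := hγ.1
  have h2 := hγ.2
  rw [hγk] at h1 h2
  have hk1 : (k : ℝ) < 1/4 := by nlinarith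
  have hk2 : (-3/4 : ℝ) < k := by nlinarith
  have hkl : k < 1 := by exact_mod_cast show (k:ℝ) < 1 by linarith
  have hkg : (-1 : ℤ) < k := by exact_mod_cast show (-1:ℝ) < k by linarith
  omega
end

section
/- Let α > 0 with α = 1/(π + 2πm) for some m ∈ ℕ₀, and set b := -1/α, γ₁ := 0, γ₂ := 3π/2. Then with a₁ = a₂ = 1 the system α·b·a₁·cos(γ₁) = a₁·sin(γ₁) - a₂·sin(b + γ₂), α·b·a₂·sin(b + γ₂) = a₂·cos(b + γ₂) - a₁·cos(γ₁), α·b·a₂·cos(b/2 + γ₂) = a₂·sin(b/2 + γ₂) - a₁·sin(b/2 + γ₁), α·b·a₁·sin(b/2 + γ₁) = a₁·cos(b/2 + γ₁) - a₂·cos(b/2 + γ₂) is satisfied. -/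
open Real

theorem special_alpha_eigenfunction (α : ℝ) (m : ℕ)
    (hα : α = 1 / (π + 2*π*m)) (b γ₁ γ₂ : ℝ)
    (hb : b = -1/α) (hγ₁ : γ₁ = 0) (hγ₂ : γ₂ = 3*π/2) :
    α * b * 1 * Real.cos γ₁ = 1 * Real.sin γ₁ - 1 * Real.sin (b + γ₂) ∧
    α * b * 1 * Real.sin (b + γ₂) = 1 * Real.cos (b + γ₂) - 1 * Real.cos γ₁ ∧
    α * b * 1 * Real.cos (b/2 + γ₂) = 1 * Real.sin (b/2 + γ₂) - 1 * Real.sin (b/2 + γ₁) ∧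
    α * b * 1 * Real.sin (b/2 + γ₁) = 1 * Real.cos (b/2 + γ₁) - 1 * Real.cos (b/2 + γ₂) := by
  have hS : (π + 2*π*m) > 0 := by positivity
  have hb' : b = -(π + 2*π*m) := by rw [hb, hα]; field_simp
  have hab : α * b = -1 := by rw [hα, hb']; field_simp
  have h1 : b + γ₂ = π/2 - m * (2*π) := by rw [hb', hγ₂]; ring
  have h2 : b/2 + γ₂ = π - m * π := by rw [hb', hγ₂]; ring
  have h3 : b/2 + γ₁ = -(π/2 + m * π) := by rw [hb', hγ₁]; ring
  have hmt : Real.cos (m * (2*π)) = 1 := Real.cos_nat_mul_two_pi m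
  have hst : Real.sin ((m:ℝ) * (2*π)) = 0 := by
    have : (m:ℝ) * (2*π) = (2*m) * π := by ring
    rw [this]; exact_mod_cast Real.sin_nat_mul_pi (2*m)
  have hsm : Real.sin ((m:ℝ) * π) = 0 := Real.sin_nat_mul_pi m
  have hs1 : Real.sin (b + γ₂) = 1 := by
    rw [h1, Real.sin_sub]; simp [hmt, hst]
  have hc1 : Real.cos (b + γ₂) = 0 := by
    rw [h1, Real.cos_sub]; simp [hmt, hst]
  have hs2 : Real.sin (b/2 + γ₂) = 0 := by
    rw [h2, Real.sin_sub]; simp [hsm]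
  have hc2 : Real.cos (b/2 + γ₂) = -Real.cos (m*π) := by
    rw [h2, Real.cos_sub]; simp [hsm]
  have hs3 : Real.sin (b/2 + γ₁) = -Real.cos (m*π) := by
    rw [h3, Real.sin_neg, Real.sin_add]; simp [hsm]
  have hc3 : Real.cos (b/2 + γ₁) = 0 := by
    rw [h3, Real.cos_neg, Real.cos_add]; simp [hsm]
  rw [hs1, hc1, hs2, hc2, hs3, hc3, hγ₁]
  simp only [Real.sin_zero, Real.cos_zero]
  rw [hab]
  norm_num
end

section
/- Let α > 0 and for k ∈ ℤ let γ₁^{(k)} ∈ (-π/2, π/2) be the unique solution of tan(γ) = 1 - 4αγ + απ + 2παk, and b^{(k)} := -4γ₁^{(k)} + π + 2πk. Then γ₁^{(0)} = π/4 and b^{(0)} = 0, and for k₁ ≠ k₂ we have (b^{(k₁)})² ≠ (b^{(k₂)})². -/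
open Real

theorem two_atom_eigenvalues_simple (α : ℝ) (hα : 0 < α) (γ₁ b : ℤ → ℝ)
    (hγ₁ : ∀ k : ℤ, γ₁ k ∈ Set.Ioo (-(π/2)) (π/2) ∧
      Real.tan (γ₁ k) = 1 - 4*α*(γ₁ k) + α*π + 2*π*α*k)
    (hb : ∀ k : ℤ, b k = -4*(γ₁ k) + π + 2*π*k) :
    γ₁ 0 = π/4 ∧ b 0 = 0 ∧ ∀ k₁ k₂ : ℤ, k₁ ≠ k₂ → (b k₁)^2 ≠ (b k₂)^2 := by
  have hπ := Real.pi_pos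
  have htanmono := Real.strictMonoOn_tan
  have hinj : Set.InjOn Real.tan (Set.Ioo (-(π/2)) (π/2)) := Real.injOn_tan
  have key : ∀ x ∈ Set.Ioo (-(π/2)) (π/2), ∀ y ∈ Set.Ioo (-(π/2)) (π/2),
      Real.tan x + 4*α*x = Real.tan y + 4*α*y → x = y := by
    intro x hx y hy h
    rcases lt_trichotomy x y with hlt | heq | hlt
    · have := htanmono hx hy hlt; nlinarith
    · exact heq
    · have := htanmono hy hx hlt; nlinarith
  have hpi4 : π/4 ∈ Set.Ioo (-(π/2)) (π/2) := by
    constructor <;> nlinarith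
  have hg0 : γ₁ 0 = π/4 := by
    apply key _ (hγ₁ 0).1 _ hpi4
    have h := (hγ₁ 0).2
    push_cast at h
    rw [Real.tan_pi_div_four]
    linear_combination h
  have htb : ∀ k : ℤ, Real.tan (γ₁ k) = 1 + α * b k := by
    intro k
    have h := (hγ₁ k).2
    rw [hb k]
    linear_combination h
  refine ⟨hg0, by rw [hb 0, hg0]; push_cast; ring, ?_⟩
  intro k₁ k₂ hne hsq
  have hcases : b k₁ - b k₂ = 0 ∨ b k₁ + b k₂ = 0 := by
    rcases mul_eq_zero.mp (show (b k₁ - b k₂) * (b k₁ + b k₂) = 0 by linear_combination hsq) with h | h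
    · exact Or.inl h
    · exact Or.inr h
  have h1 := htb k₁
  have h2 := htb k₂
  have hm1 := (hγ₁ k₁).1
  have hm2 := (hγ₁ k₂).1
  rcases hcases with heq | hadd
  · have hbeq : b k₁ = b k₂ := by linarith
    have hgeq : γ₁ k₁ = γ₁ k₂ := hinj hm1 hm2 (by rw [h1, h2, hbeq])
    have e1 := hb k₁
    have e2 := hb k₂
    have : 2 * π * (k₁ : ℝ) = 2 * π * (k₂ : ℝ) := by
      rw [hbeq] at e1
      linear_combination e2 - e1 + 4 * hgeq
    have : (k₁ : ℝ) = (k₂ : ℝ) := by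
      have h2π : (2 * π : ℝ) ≠ 0 := by positivity
      exact mul_left_cancel₀ h2π this
    exact hne (by exact_mod_cast this)
  · -- b k₁ + b k₂ = 0
    have e1 := hb k₁
    have e2 := hb k₂
    have hsum : γ₁ k₁ + γ₁ k₂ = π * (1 + k₁ + k₂ : ℤ) / 2 := by
      push_cast
      linear_combination (e1 + e2 - hadd) / 4
    set m : ℤ := 1 + k₁ + k₂ with hmdef
    have hmlt : -2 < m ∧ m < 2 := by
      have hlo : -π < γ₁ k₁ + γ₁ k₂ := by
        obtain ⟨a1, _⟩ := hm1; obtain ⟨a2, _⟩ := hm2; linarith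
      have hhi : γ₁ k₁ + γ₁ k₂ < π := by
        obtain ⟨_, a1⟩ := hm1; obtain ⟨_, a2⟩ := hm2; linarith
      rw [hsum] at hlo hhi
      constructor
      · have : (-2 : ℝ) < (m : ℝ) := by nlinarith
        exact_mod_cast this
      · have : (m : ℝ) < 2 := by nlinarith
        exact_mod_cast this
    have hmor : m = -1 ∨ m = 0 ∨ m = 1 := by omega
    have htansum : Real.tan (γ₁ k₁) + Real.tan (γ₁ k₂) = 2 := by
      rw [h1, h2]; linear_combination α * hadd
    rcases hmor with hm | hm | hm
    all_goals (rw [hm] at hsum; push_cast at hsum)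
    · -- g1 + g2 = -π/2 ≤ 0
      have hneg : -γ₁ k₁ ∈ Set.Ioo (-(π/2)) (π/2) := by
        obtain ⟨a1, a2⟩ := hm1; constructor <;> linarith
      have hle : Real.tan (γ₁ k₂) ≤ Real.tan (-γ₁ k₁) :=
        htanmono.monotoneOn hm2 hneg (by linarith)
      rw [Real.tan_neg] at hle
      linarith
    · have hneg : -γ₁ k₁ ∈ Set.Ioo (-(π/2)) (π/2) := by
        obtain ⟨a1, a2⟩ := hm1; constructor <;> linarith
      have hle : Real.tan (γ₁ k₂) ≤ Real.tan (-γ₁ k₁) :=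
        htanmono.monotoneOn hm2 hneg (by linarith)
      rw [Real.tan_neg] at hle
      linarith
    · -- g1 + g2 = π/2
      have hg2 : γ₁ k₂ = π/2 - γ₁ k₁ := by linarith
      have ht2 : Real.tan (γ₁ k₂) = (Real.tan (γ₁ k₁))⁻¹ := by
        rw [hg2, Real.tan_pi_div_two_sub]
      have hg1pos : 0 < γ₁ k₁ := by
        obtain ⟨_, a2⟩ := hm2; linarith
      have htpos : 0 < Real.tan (γ₁ k₁) :=
        Real.tan_pos_of_pos_of_lt_pi_div_two hg1pos hm1.2
      have ht : Real.tan (γ₁ k₁) + (Real.tan (γ₁ k₁))⁻¹ = 2 := by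
        rw [← ht2]; exact htansum
      have ht1 : Real.tan (γ₁ k₁) = 1 := by
        have hne0 : Real.tan (γ₁ k₁) ≠ 0 := ne_of_gt htpos
        field_simp at ht
        nlinarith [sq_nonneg (Real.tan (γ₁ k₁) - 1)]
      have hbk1 : b k₁ = 0 := by
        rw [ht1] at h1
        have : α * b k₁ = 0 := by linarith
        rcases mul_eq_zero.mp this with h | h
        · exact absurd h (ne_of_gt hα)
        · exact h
      have hg1 : γ₁ k₁ = π/4 := hinj hm1 hpi4 (by rw [ht1, Real.tan_pi_div_four])
      have hk1 : (k₁ : ℝ) = 0 := by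
        rw [hbk1, hg1] at e1
        have h2π : (2 * π : ℝ) ≠ 0 := by positivity
        have : 2 * π * (k₁ : ℝ) = 2 * π * 0 := by linear_combination -e1
        exact mul_left_cancel₀ h2π this
      have hk2 : (k₂ : ℝ) = 0 := by
        have hbk2 : b k₂ = 0 := by linarith
        rw [hbk2, hg2, hg1] at e2
        have h2π : (2 * π : ℝ) ≠ 0 := by positivity
        have : 2 * π * (k₂ : ℝ) = 2 * π * 0 := by linear_combination -e2
        exact mul_left_cancel₀ h2π this
      have : k₁ = k₂ := by
        have : (k₁ : ℝ) = (k₂ : ℝ) := by rw [hk1, hk2]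
        exact_mod_cast this
      exact hne this
end

section
/- Let α > 0, and for k ∈ ℤ let γ₁^{(k)} ∈ (-π/2, π/2) be the unique solution of tan(γ) = 1 - 4αγ + απ + 2παk and b^{(k)} := -4γ₁^{(k)} + π + 2πk. Then lim_{k→∞} (-b^{(k)}/b^{(-k-1)}) = 1. -/
open Real Filter

theorem two_atom_eigenvalue_pairing (α : ℝ) (hα : 0 < α) (γ₁ b : ℤ → ℝ)
    (hγ₁ : ∀ k : ℤ, γ₁ k ∈ Set.Ioo (-(π/2)) (π/2) ∧
      Real.tan (γ₁ k) = 1 - 4*α*(γ₁ k) + α*π + 2*π*α*k)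
    (hb : ∀ k : ℤ, b k = -4*(γ₁ k) + π + 2*π*k) :
    Tendsto (fun k : ℤ => -(b k) / b (-k-1)) atTop (nhds 1) := by
  have hπ := Real.pi_pos
  have hk : Tendsto (fun k : ℤ => (k : ℝ)) atTop atTop := tendsto_intCast_atTop_atTop
  have hbound : ∀ m : ℤ, |γ₁ m| ≤ π/2 := by
    intro m
    have h1 := (hγ₁ m).1
    rw [Set.mem_Ioo] at h1
    rw [abs_le]; constructor <;> linarith [h1.1, h1.2]
  -- generic lemma: (c + bounded)/k → 0 where c constant, bounded term
  have key : ∀ (f : ℤ → ℝ) (C : ℝ), (∀ m, |f m| ≤ C) →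
      Tendsto (fun k : ℤ => f k / k) atTop (nhds 0) := by
    intro f C hC
    have hg : Tendsto (fun k : ℤ => C / k) atTop (nhds 0) :=
      tendsto_const_nhds.div_atTop hk
    refine squeeze_zero_norm' ?_ hg
    filter_upwards [hk.eventually_gt_atTop 0] with k hk0
    rw [Real.norm_eq_abs, abs_div, abs_of_pos hk0]
    exact div_le_div_of_nonneg_right (hC k) hk0.le
  have hA : Tendsto (fun k : ℤ => b k / k) atTop (nhds (2*π)) := by
    have h0 : Tendsto (fun k : ℤ => (-4*(γ₁ k) + π) / k + 2*π) atTop (nhds (0 + 2*π)) := by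
      apply Tendsto.add _ tendsto_const_nhds
      apply key _ (3*π)
      intro m
      have := hbound m
      rw [abs_le] at this ⊢
      constructor <;> nlinarith [this.1, this.2]
    rw [zero_add] at h0
    apply h0.congr'
    filter_upwards [hk.eventually_gt_atTop 0] with k hk0
    have hkne : (k : ℝ) ≠ 0 := ne_of_gt hk0
    rw [hb k]
    field_simp
    try ring
  have hB : Tendsto (fun k : ℤ => b (-k-1) / k) atTop (nhds (-(2*π))) := by
    have h0 : Tendsto (fun k : ℤ => (-4*(γ₁ (-k-1)) - π) / k + -(2*π)) atTop
        (nhds (0 + -(2*π))) := by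
      apply Tendsto.add _ tendsto_const_nhds
      apply key _ (3*π)
      intro m
      have := hbound (-m-1)
      rw [abs_le] at this ⊢
      constructor <;> nlinarith [this.1, this.2]
    rw [zero_add] at h0
    apply h0.congr'
    filter_upwards [hk.eventually_gt_atTop 0] with k hk0
    have hkne : (k : ℝ) ≠ 0 := ne_of_gt hk0
    rw [hb (-k-1)]
    push_cast
    field_simp
    try ring
  have hne : -(2*π) ≠ 0 := neg_ne_zero.mpr (by positivity)
  have hmain := (hA.neg).div hB hne
  have h1 : (-(2*π)) / (-(2*π)) = 1 := div_self hne
  rw [h1] at hmain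
  apply hmain.congr'
  filter_upwards [hk.eventually_gt_atTop 0] with k hk0
  have hkne : (k : ℝ) ≠ 0 := ne_of_gt hk0
  simp only [Pi.div_apply]
  by_cases hz : b (-k-1) = 0
  · simp [hz]
  · field_simp
    try ring
end
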